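/- arXiv:0712.4222 — 2 statements merged into one kernel-verified Lean document; each statement's English description precedes it below -/
import Mathlib

section
/- Let Π be a WALT deduction of Γ;Δ;E ⊢ M:B whose subject M is a value. (1) If B = !A for some A, then the last rule of Π is the rule !, and FV(M) ⊆ dom(E). (2) If B = $A for some A, then the last rule of Π is the rule $ or the contraction C, and FV(M) ⊆ dom(Δ) ∪ dom(E). -/
set_option maxHeartbeats 1000000
/-
A formalization of the syntax of Weak Affine Light Typing (WALT),
following L. Roversi, "Weak Affine Light Typing: Polytime intensional
expressivity, soundness and completeness".

* `Term`  : pure λ-terms with named variables,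
* `Ty`    : WALT formulae  A ::= L | !A | $A ,  L ::= α | A⊸A | $A⊸ᵉA | ∀α.L,
* `Deduction Γ Δ E M A` : the deductions of the judgment Γ;Δ;E ⊢ M:A of Fig. 1,
* measures `depth`, `psz` (partial size) and `width` of a deduction,
* the rewriting relation `Step` (⊳) and its depth-indexed version `StepAt`,
* rounds and canonical strategies.
-/

namespace WALT

/-! ### Types -/

inductive Ty : Type where
  | tvar : ℕ → Ty
  | arr  : Ty → Ty → Ty          -- A ⊸ B
  | earr : Ty → Ty → Ty          -- `earr A B` stands for  $A ⊸ᵉ B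
  | bang : Ty → Ty               -- !A
  | par  : Ty → Ty               -- $A
  | all  : ℕ → Ty → Ty           -- ∀α.L
  deriving DecidableEq

/-- Linear (non-modal) formulae `L`. -/
def Ty.Linear : Ty → Prop
  | .tvar _ => True
  | .arr _ _ => True
  | .earr _ _ => True
  | .bang _ => False
  | .par _ => False
  | .all _ L => L.Linear

/-- Free type variables. -/
def Ty.ftv : Ty → Finset ℕ
  | .tvar a => {a}
  | .arr A B => A.ftv ∪ B.ftv
  | .earr A B => A.ftv ∪ B.ftv
  | .bang A => A.ftv
  | .par A => A.ftv
  | .all a L => L.ftv.erase a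

/-- Substitution of a type for a type variable. -/
def Ty.tsubst : Ty → ℕ → Ty → Ty
  | .tvar b, a, L => if b = a then L else .tvar b
  | .arr B C, a, L => .arr (B.tsubst a L) (C.tsubst a L)
  | .earr B C, a, L => .earr (B.tsubst a L) (C.tsubst a L)
  | .bang B, a, L => .bang (B.tsubst a L)
  | .par B, a, L => .par (B.tsubst a L)
  | .all b L', a, L => if b = a then .all b L' else .all b (L'.tsubst a L)

/-! ### λ-terms -/

inductive Term : Type where
  | var : ℕ → Term
  | lam : ℕ → Term → Term
  | app : Term → Term → Term
  deriving DecidableEq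

/-- Free variables. -/
def Term.FV : Term → Finset ℕ
  | .var y => {y}
  | .lam y M => M.FV.erase y
  | .app M N => M.FV ∪ N.FV

/-- `noOcc x M` = number of free occurrences of `x` in `M`. -/
def Term.noOcc (x : ℕ) : Term → ℕ
  | .var y => if y = x then 1 else 0
  | .lam y M => if y = x then 0 else M.noOcc x
  | .app M N => M.noOcc x + N.noOcc x

/-- Size of a term. -/
def Term.size : Term → ℕ
  | .var _ => 1
  | .lam _ M => M.size + 1
  | .app M N => M.size + N.size + 1

/-- (Capture-free) substitution `M[N/x]`. -/
def Term.subst : Term → ℕ → Term → Term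
  | .var y, x, N => if y = x then N else .var y
  | .lam y M, x, N => if y = x then .lam y M else .lam y (M.subst x N)
  | .app M P, x, N => .app (M.subst x N) (P.subst x N)

/-- Values: variables and abstractions. -/
def Term.IsValue : Term → Prop
  | .app _ _ => False
  | _ => True

/-! ### Contexts -/

/-- A set of type assignments (used for Γ, Δ, Θ, Φ). -/
abbrev Ctx : Type := Finset (ℕ × Ty)

/-- A set of partially discharged contexts, i.e. of pairs (Θ;Φ). -/
abbrev PCtx : Type := Finset (Ctx × Ctx)

/-- Domain of a set of type assignments. -/
def dom (Γ : Ctx) : Finset ℕ := Γ.image Prod.fst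

/-- Domain of a set of partially discharged contexts. -/
def domE (E : PCtx) : Finset ℕ := E.biUnion fun p => dom p.1 ∪ dom p.2

/-- `$Γ` : prefix every type in `Γ` with the modality `$`. -/
def parc (Γ : Ctx) : Ctx := Γ.image fun p => (p.1, Ty.par p.2)

/-- The merge `E ⊔ F` of partially discharged contexts: pairs sharing the same
polynomial part `Φ` get their elementary parts united. -/
def pmerge (E F : PCtx) : PCtx :=
  ((E ×ˢ F).filter (fun p => p.1.2 = p.2.2)).image
      (fun p => (p.1.1 ∪ p.2.1, p.1.2)) ∪
    E.filter (fun p => ∀ q ∈ F, q.2 ≠ p.2) ∪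
    F.filter (fun q => ∀ p ∈ E, p.2 ≠ q.2)

/-! ### The type assignment system of Fig. 1 -/

inductive Deduction : Ctx → Ctx → PCtx → Term → Ty → Type where
  /-- rule A -/
  | ax {Γ Δ : Ctx} {E : PCtx} {x : ℕ} {L : Ty} (hL : L.Linear) :
      Deduction (insert (x, L) Γ) Δ E (.var x) L
  /-- rule C -/
  | contr {Γ Δ : Ctx} {E : PCtx} {Θx Θy : Ctx} {x y z : ℕ} {A : Ty} {M : Term} {B : Ty}
      (h1 : (Θx, ({(x, A)} : Ctx)) ∉ insert (Θy, ({(y, A)} : Ctx)) E)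
      (h2 : (Θy, ({(y, A)} : Ctx)) ∉ E)
      (prem : Deduction Γ Δ (insert (Θx, {(x, A)}) (insert (Θy, {(y, A)}) E)) M B) :
      Deduction Γ Δ (pmerge E {(Θx ∪ Θy, {(z, A)})})
        ((M.subst x (.var z)).subst y (.var z)) B
  /-- rule ⊸I -/
  | arrI {Γ Δ : Ctx} {E : PCtx} {x : ℕ} {L : Ty} {M : Term} {B : Ty}
      (hL : L.Linear) (hx : x ∉ dom Γ)
      (prem : Deduction (insert (x, L) Γ) Δ E M B) :
      Deduction Γ Δ E (.lam x M) (.arr L B)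
  /-- rule ⊸I_$ -/
  | arrIPar {Γ Δ : Ctx} {E : PCtx} {x : ℕ} {A : Ty} {M : Term} {B : Ty}
      (hx : x ∉ dom Δ)
      (prem : Deduction Γ (insert (x, A) Δ) E M B) :
      Deduction Γ Δ E (.lam x M) (.arr (.par A) B)
  /-- rule ⊸E -/
  | arrE {ΓM ΔM ΓN ΔN : Ctx} {EM EN : PCtx} {M N : Term} {A B : Ty}
      (hA : ∀ C, A ≠ Ty.bang C)
      (hΓ : Disjoint (dom ΓM) (dom ΓN)) (hΔ : Disjoint (dom ΔM) (dom ΔN))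
      (d1 : Deduction ΓM ΔM EM M (.arr A B)) (d2 : Deduction ΓN ΔN EN N A) :
      Deduction (ΓM ∪ ΓN) (ΔM ∪ ΔN) (pmerge EM EN) (.app M N) B
  /-- rule ⊸I_! -/
  | arrIBang {Γ Δ : Ctx} {E : PCtx} {Θ : Ctx} {x : ℕ} {A : Ty} {M : Term} {B : Ty}
      (hmem : (Θ, ({(x, A)} : Ctx)) ∉ E)
      (prem : Deduction Γ Δ (insert (Θ, {(x, A)}) E) M B) :
      Deduction Γ Δ (pmerge E {(Θ, ∅)}) (.lam x M) (.arr (.bang A) B)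
  /-- rule ⊸E_! -/
  | arrEBang {ΓM ΔM ΓN ΔN : Ctx} {EM EN : PCtx} {M N : Term} {A B : Ty}
      (hEM : ∀ p ∈ EM, p.1 = (∅ : Ctx))
      (hΓ : Disjoint (dom ΓM) (dom ΓN)) (hΔ : Disjoint (dom ΔM) (dom ΔN))
      (d1 : Deduction ΓM ΔM EM M (.arr (.bang A) B)) (d2 : Deduction ΓN ΔN EN N (.bang A)) :
      Deduction (ΓM ∪ ΓN) (ΔM ∪ ΔN) (pmerge EM EN) (.app M N) B
  /-- rule ⊸ᵉI -/
  | earrI {Γ Δ : Ctx} {E : PCtx} {Θ : Ctx} {x : ℕ} {A : Ty} {M : Term} {B : Ty}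
      (hmem : (insert (x, A) Θ, (∅ : Ctx)) ∉ E)
      (prem : Deduction Γ Δ (insert (insert (x, A) Θ, (∅ : Ctx)) E) M B) :
      Deduction Γ Δ (pmerge E {(Θ, ∅)}) (.lam x M) (.earr A B)
  /-- rule ⊸ᵉE -/
  | earrE {ΓM Δ : Ctx} {EM EN : PCtx} {Θ : Ctx} {M N : Term} {A B : Ty}
      (hEN : EN ⊆ {(Θ, (∅ : Ctx))})
      (d1 : Deduction ΓM Δ EM M (.earr A B)) (d2 : Deduction ∅ ∅ EN N (.par A)) :
      Deduction ΓM Δ (pmerge EM EN) (.app M N) B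
  /-- rule $ -/
  | box {Γ Γ' Δ Δ' Θ' : Ctx} {E₂ : PCtx} {M : Term} {B : Ty}
      (hcov : Γ ⊆ Δ ∪ E₂.biUnion (fun p => p.1 ∪ p.2))
      (hE₂ : ∀ p ∈ E₂, (p.1 ≠ (∅ : Ctx) ↔ p.2 = (∅ : Ctx)))
      (hΦ : ∀ p ∈ E₂, p.2.card ≤ 1)
      (prem : Deduction Γ Δ' {(Θ', (∅ : Ctx))} M B) :
      Deduction Γ' (parc Δ' ∪ Δ) (pmerge {(parc Θ', ∅)} E₂) M (.par B)
  /-- rule ! -/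
  | bang {Γ Γ' Δ Θ' Θ Φ : Ctx} {M : Term} {B : Ty}
      (hcov : Γ ⊆ Θ ∪ Φ) (hΦ : Φ.card ≤ 1)
      (hpoly : Θ ≠ ∅ → (dom Φ ∩ M.FV).Nonempty)
      (prem : Deduction Γ ∅ {(Θ', (∅ : Ctx))} M B) :
      Deduction Γ' Δ (pmerge {(parc Θ', ∅)} {(Θ, Φ)}) M (.bang B)
  /-- rule ∀I -/
  | allI {Γ Δ : Ctx} {E : PCtx} {M : Term} {L : Ty} {a : ℕ}
      (hL : L.Linear)
      (hfresh : (∀ p ∈ Γ, a ∉ Ty.ftv p.2) ∧ (∀ p ∈ Δ, a ∉ Ty.ftv p.2) ∧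
        ∀ q ∈ E, (∀ p ∈ q.1, a ∉ Ty.ftv p.2) ∧ (∀ p ∈ q.2, a ∉ Ty.ftv p.2))
      (prem : Deduction Γ Δ E M L) :
      Deduction Γ Δ E M (.all a L)
  /-- rule ∀E -/
  | allE {Γ Δ : Ctx} {E : PCtx} {M : Term} {a : ℕ} {L : Ty}
      (L' : Ty) (hL' : L'.Linear)
      (prem : Deduction Γ Δ E M (.all a L)) :
      Deduction Γ Δ E M (Ty.tsubst L a L')

/-! ### Measures of deductions -/

/-- Depth (level) of a deduction: maximal nesting of the rules `!` and `$`. -/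
def depth : {Γ Δ : Ctx} → {E : PCtx} → {M : Term} → {A : Ty} →
    Deduction Γ Δ E M A → ℕ
  | _, _, _, _, _, .ax _ => 0
  | _, _, _, _, _, .contr _ _ d => depth d
  | _, _, _, _, _, .arrI _ _ d => depth d
  | _, _, _, _, _, .arrIPar _ d => depth d
  | _, _, _, _, _, .arrE _ _ _ d1 d2 => max (depth d1) (depth d2)
  | _, _, _, _, _, .arrIBang _ d => depth d
  | _, _, _, _, _, .arrEBang _ _ _ d1 d2 => max (depth d1) (depth d2)
  | _, _, _, _, _, .earrI _ d => depth d
  | _, _, _, _, _, .earrE _ d1 d2 => max (depth d1) (depth d2)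
  | _, _, _, _, _, .box _ _ _ d => depth d + 1
  | _, _, _, _, _, .bang _ _ _ d => depth d + 1
  | _, _, _, _, _, .allI _ _ d => depth d
  | _, _, _, _, _, .allE _ _ d => depth d

/-- Partial size `‖Π‖_n` of a deduction at depth `n`. -/
def psz : ℕ → {Γ Δ : Ctx} → {E : PCtx} → {M : Term} → {A : Ty} →
    Deduction Γ Δ E M A → ℕ
  | n, _, _, _, _, _, .ax _ => if n = 0 then 1 else 0
  | n, _, _, _, _, _, .contr _ _ d => if n = 0 then psz 0 d else psz n d + 1
  | n, _, _, _, _, _, .arrI _ _ d => if n = 0 then psz 0 d + 1 else psz n d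
  | n, _, _, _, _, _, .arrIPar _ d => if n = 0 then psz 0 d + 1 else psz n d
  | n, _, _, _, _, _, .arrE _ _ _ d1 d2 => psz n d1 + psz n d2 + 1
  | n, _, _, _, _, _, .arrIBang _ d => if n = 0 then psz 0 d + 1 else psz n d
  | n, _, _, _, _, _, .arrEBang _ _ _ d1 d2 => psz n d1 + psz n d2 + 1
  | n, _, _, _, _, _, .earrI _ d => if n = 0 then psz 0 d + 1 else psz n d
  | n, _, _, _, _, _, .earrE _ d1 d2 => psz n d1 + psz n d2 + 1
  | n, _, _, _, _, _, .box _ _ _ d => if n = 0 then 0 else psz (n - 1) d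
  | n, _, _, _, _, _, .bang _ _ _ d => if n = 0 then 0 else psz (n - 1) d
  | n, _, _, _, _, _, .allI _ _ d => psz n d
  | n, _, _, _, _, _, .allE _ _ d => psz n d

/-- Width `w_n(Π)` of a deduction at depth `n`. -/
def width : ℕ → {Γ Δ : Ctx} → {E : PCtx} → {M : Term} → {A : Ty} →
    Deduction Γ Δ E M A → ℕ
  | _, _, _, _, _, _, .ax _ => 0
  | n, _, _, _, _, _, .contr _ _ d =>
      if n = 0 then 0 else if n = 1 then width 1 d + 1 else width n d
  | n, _, _, _, _, _, .arrI _ _ d => if n = 0 then 0 else width n d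
  | n, _, _, _, _, _, .arrIPar _ d => if n = 0 then 0 else width n d
  | n, _, _, _, _, _, .arrE _ _ _ d1 d2 =>
      if n = 0 then 0 else if n = 1 then width 1 d1 + width 1 d2 + 1
      else width n d1 + width n d2
  | n, _, _, _, _, _, .arrIBang _ d => if n = 0 then 0 else width n d
  | n, _, _, _, _, _, .arrEBang _ _ _ d1 d2 =>
      if n = 0 then 0 else if n = 1 then width 1 d1 + width 1 d2 + 1
      else width n d1 + width n d2
  | n, _, _, _, _, _, .earrI _ d => if n = 0 then 0 else width n d
  | n, _, _, _, _, _, .earrE _ d1 d2 =>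
      if n = 0 then 0 else if n = 1 then width 1 d1 + width 1 d2 + 1
      else width n d1 + width n d2
  | n, _, _, _, _, _, .box _ _ _ d => if n = 0 then 0 else width (n - 1) d
  | n, _, _, _, _, _, .bang _ _ _ d => if n = 0 then 0 else width (n - 1) d
  | n, _, _, _, _, _, .allI _ _ d => if n = 0 then 0 else width n d
  | n, _, _, _, _, _, .allE _ _ d => if n = 0 then 0 else width n d

/-- Number of instances of the rules C, ⊸E, ⊸E_!, ⊸ᵉE in a deduction. -/
def ccount : {Γ Δ : Ctx} → {E : PCtx} → {M : Term} → {A : Ty} →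
    Deduction Γ Δ E M A → ℕ
  | _, _, _, _, _, .ax _ => 0
  | _, _, _, _, _, .contr _ _ d => ccount d + 1
  | _, _, _, _, _, .arrI _ _ d => ccount d
  | _, _, _, _, _, .arrIPar _ d => ccount d
  | _, _, _, _, _, .arrE _ _ _ d1 d2 => ccount d1 + ccount d2 + 1
  | _, _, _, _, _, .arrIBang _ d => ccount d
  | _, _, _, _, _, .arrEBang _ _ _ d1 d2 => ccount d1 + ccount d2 + 1
  | _, _, _, _, _, .earrI _ d => ccount d
  | _, _, _, _, _, .earrE _ d1 d2 => ccount d1 + ccount d2 + 1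
  | _, _, _, _, _, .box _ _ _ d => ccount d
  | _, _, _, _, _, .bang _ _ _ d => ccount d
  | _, _, _, _, _, .allI _ _ d => ccount d
  | _, _, _, _, _, .allE _ _ d => ccount d

/-! ### Last rule of a deduction -/

def endsInAx : {Γ Δ : Ctx} → {E : PCtx} → {M : Term} → {A : Ty} →
    Deduction Γ Δ E M A → Prop
  | _, _, _, _, _, .ax _ => True
  | _, _, _, _, _, _ => False

def endsInContr : {Γ Δ : Ctx} → {E : PCtx} → {M : Term} → {A : Ty} →
    Deduction Γ Δ E M A → Prop
  | _, _, _, _, _, .contr _ _ _ => True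
  | _, _, _, _, _, _ => False

def endsInBang : {Γ Δ : Ctx} → {E : PCtx} → {M : Term} → {A : Ty} →
    Deduction Γ Δ E M A → Prop
  | _, _, _, _, _, .bang _ _ _ _ => True
  | _, _, _, _, _, _ => False

def endsInPar : {Γ Δ : Ctx} → {E : PCtx} → {M : Term} → {A : Ty} →
    Deduction Γ Δ E M A → Prop
  | _, _, _, _, _, .box _ _ _ _ => True
  | _, _, _, _, _, _ => False

/-! ### Packaged deductions and subdeductions -/

/-- A deduction together with its conclusion judgment. -/
structure Ded : Type where
  Γ : Ctx
  Δ : Ctx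
  E : PCtx
  M : Term
  A : Ty
  ded : Deduction Γ Δ E M A

def Ded.depth (D : Ded) : ℕ := WALT.depth D.ded

/-- Total size of a deduction: the sum of its partial sizes. -/
def Ded.dsize (D : Ded) : ℕ := ∑ i ∈ Finset.range (D.depth + 1), psz i D.ded

/-- Immediate subdeductions. -/
def children : {Γ Δ : Ctx} → {E : PCtx} → {M : Term} → {A : Ty} →
    Deduction Γ Δ E M A → List Ded
  | _, _, _, _, _, .ax _ => []
  | _, _, _, _, _, .contr _ _ d => [Ded.mk _ _ _ _ _ d]
  | _, _, _, _, _, .arrI _ _ d => [Ded.mk _ _ _ _ _ d]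
  | _, _, _, _, _, .arrIPar _ d => [Ded.mk _ _ _ _ _ d]
  | _, _, _, _, _, .arrE _ _ _ d1 d2 => [Ded.mk _ _ _ _ _ d1, Ded.mk _ _ _ _ _ d2]
  | _, _, _, _, _, .arrIBang _ d => [Ded.mk _ _ _ _ _ d]
  | _, _, _, _, _, .arrEBang _ _ _ d1 d2 => [Ded.mk _ _ _ _ _ d1, Ded.mk _ _ _ _ _ d2]
  | _, _, _, _, _, .earrI _ d => [Ded.mk _ _ _ _ _ d]
  | _, _, _, _, _, .earrE _ d1 d2 => [Ded.mk _ _ _ _ _ d1, Ded.mk _ _ _ _ _ d2]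
  | _, _, _, _, _, .box _ _ _ d => [Ded.mk _ _ _ _ _ d]
  | _, _, _, _, _, .bang _ _ _ d => [Ded.mk _ _ _ _ _ d]
  | _, _, _, _, _, .allI _ _ d => [Ded.mk _ _ _ _ _ d]
  | _, _, _, _, _, .allE _ _ d => [Ded.mk _ _ _ _ _ d]

/-- `Sub P D` : `P` is a subdeduction of `D`. -/
def Sub (P D : Ded) : Prop :=
  Relation.ReflTransGen (fun a b => a ∈ children b.ded) P D

/-! ### The rewriting relation ⊳ -/

/-- Side conditions under which the redex `(λx.P)Q` may be contracted. -/
def BetaOk (x : ℕ) (P Q : Term) : Prop :=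
  P.noOcc x = 0 ∨ (P.noOcc x = 1 ∧ Q.IsValue) ∨
    (1 < P.noOcc x ∧ Q.IsValue ∧ ∃ y, Q.FV ⊆ {y})

/-- The rewriting relation ⊳ : contextual closure of the conditional β-rule. -/
inductive Step : Term → Term → Prop where
  | beta {x : ℕ} {P Q : Term} (h : BetaOk x P Q) :
      Step (.app (.lam x P) Q) (P.subst x Q)
  | appL {M M' N : Term} (h : Step M M') : Step (.app M N) (.app M' N)
  | appR {M N N' : Term} (h : Step N N') : Step (.app M N) (.app M N')
  | lam {x : ℕ} {M M' : Term} (h : Step M M') : Step (.lam x M) (.lam x M')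

/-- `StepAt n d N x P q` : the subject of the deduction `d` contains a redex
`(λx.P)Q` lying at depth `n` of `d`, whose contraction turns the subject of `d`
into `N`; `q` is the subdeduction of `d` typing the argument `Q` of the redex. -/
inductive StepAt :
    ℕ → {Γ Δ : Ctx} → {E : PCtx} → {M : Term} → {A : Ty} →
      Deduction Γ Δ E M A → Term → ℕ → Term → Ded → Prop where
  | redexArr {ΓM ΔM ΓN ΔN : Ctx} {EM EN : PCtx} {x : ℕ} {P Q : Term} {A B : Ty}
      (hA : ∀ C, A ≠ Ty.bang C) (hΓ : Disjoint (dom ΓM) (dom ΓN))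
      (hΔ : Disjoint (dom ΔM) (dom ΔN))
      (d1 : Deduction ΓM ΔM EM (.lam x P) (.arr A B))
      (d2 : Deduction ΓN ΔN EN Q A) (hok : BetaOk x P Q) :
      StepAt 0 (Deduction.arrE hA hΓ hΔ d1 d2) (P.subst x Q) x P (Ded.mk _ _ _ _ _ d2)
  | redexArrBang {ΓM ΔM ΓN ΔN : Ctx} {EM EN : PCtx} {x : ℕ} {P Q : Term} {A B : Ty}
      (hEM : ∀ p ∈ EM, p.1 = (∅ : Ctx)) (hΓ : Disjoint (dom ΓM) (dom ΓN))
      (hΔ : Disjoint (dom ΔM) (dom ΔN))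
      (d1 : Deduction ΓM ΔM EM (.lam x P) (.arr (.bang A) B))
      (d2 : Deduction ΓN ΔN EN Q (.bang A)) (hok : BetaOk x P Q) :
      StepAt 0 (Deduction.arrEBang hEM hΓ hΔ d1 d2) (P.subst x Q) x P (Ded.mk _ _ _ _ _ d2)
  | redexEarr {ΓM Δ : Ctx} {EM EN : PCtx} {Θ : Ctx} {x : ℕ} {P Q : Term} {A B : Ty}
      (hEN : EN ⊆ {(Θ, (∅ : Ctx))})
      (d1 : Deduction ΓM Δ EM (.lam x P) (.earr A B))
      (d2 : Deduction ∅ ∅ EN Q (.par A)) (hok : BetaOk x P Q) :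
      StepAt 0 (Deduction.earrE hEN d1 d2) (P.subst x Q) x P (Ded.mk _ _ _ _ _ d2)
  | congContr {n : ℕ} {Γ Δ : Ctx} {E : PCtx} {Θx Θy : Ctx} {x y z : ℕ} {A : Ty}
      {M : Term} {B : Ty} {N : Term} {x' : ℕ} {P' : Term} {q : Ded}
      (h1 : (Θx, ({(x, A)} : Ctx)) ∉ insert (Θy, ({(y, A)} : Ctx)) E)
      (h2 : (Θy, ({(y, A)} : Ctx)) ∉ E)
      (prem : Deduction Γ Δ (insert (Θx, {(x, A)}) (insert (Θy, {(y, A)}) E)) M B)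
      (hs : StepAt n prem N x' P' q) :
      StepAt n (Deduction.contr (z := z) h1 h2 prem)
        ((N.subst x (.var z)).subst y (.var z)) x' P' q
  | congArrI {n : ℕ} {Γ Δ : Ctx} {E : PCtx} {x : ℕ} {L : Ty} {M : Term} {B : Ty}
      {N : Term} {x' : ℕ} {P' : Term} {q : Ded}
      (hL : L.Linear) (hx : x ∉ dom Γ)
      (prem : Deduction (insert (x, L) Γ) Δ E M B)
      (hs : StepAt n prem N x' P' q) :
      StepAt n (Deduction.arrI hL hx prem) (.lam x N) x' P' q
  | congArrIPar {n : ℕ} {Γ Δ : Ctx} {E : PCtx} {x : ℕ} {A : Ty} {M : Term} {B : Ty}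
      {N : Term} {x' : ℕ} {P' : Term} {q : Ded}
      (hx : x ∉ dom Δ)
      (prem : Deduction Γ (insert (x, A) Δ) E M B)
      (hs : StepAt n prem N x' P' q) :
      StepAt n (Deduction.arrIPar hx prem) (.lam x N) x' P' q
  | congArrIBang {n : ℕ} {Γ Δ : Ctx} {E : PCtx} {Θ : Ctx} {x : ℕ} {A : Ty}
      {M : Term} {B : Ty} {N : Term} {x' : ℕ} {P' : Term} {q : Ded}
      (hmem : (Θ, ({(x, A)} : Ctx)) ∉ E)
      (prem : Deduction Γ Δ (insert (Θ, {(x, A)}) E) M B)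
      (hs : StepAt n prem N x' P' q) :
      StepAt n (Deduction.arrIBang hmem prem) (.lam x N) x' P' q
  | congEarrI {n : ℕ} {Γ Δ : Ctx} {E : PCtx} {Θ : Ctx} {x : ℕ} {A : Ty}
      {M : Term} {B : Ty} {N : Term} {x' : ℕ} {P' : Term} {q : Ded}
      (hmem : (insert (x, A) Θ, (∅ : Ctx)) ∉ E)
      (prem : Deduction Γ Δ (insert (insert (x, A) Θ, (∅ : Ctx)) E) M B)
      (hs : StepAt n prem N x' P' q) :
      StepAt n (Deduction.earrI hmem prem) (.lam x N) x' P' q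
  | congArrEL {n : ℕ} {ΓM ΔM ΓN ΔN : Ctx} {EM EN : PCtx} {M N : Term} {A B : Ty}
      {M' : Term} {x' : ℕ} {P' : Term} {q : Ded}
      (hA : ∀ C, A ≠ Ty.bang C)
      (hΓ : Disjoint (dom ΓM) (dom ΓN)) (hΔ : Disjoint (dom ΔM) (dom ΔN))
      (d1 : Deduction ΓM ΔM EM M (.arr A B)) (d2 : Deduction ΓN ΔN EN N A)
      (hs : StepAt n d1 M' x' P' q) :
      StepAt n (Deduction.arrE hA hΓ hΔ d1 d2) (.app M' N) x' P' q
  | congArrER {n : ℕ} {ΓM ΔM ΓN ΔN : Ctx} {EM EN : PCtx} {M N : Term} {A B : Ty}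
      {N' : Term} {x' : ℕ} {P' : Term} {q : Ded}
      (hA : ∀ C, A ≠ Ty.bang C)
      (hΓ : Disjoint (dom ΓM) (dom ΓN)) (hΔ : Disjoint (dom ΔM) (dom ΔN))
      (d1 : Deduction ΓM ΔM EM M (.arr A B)) (d2 : Deduction ΓN ΔN EN N A)
      (hs : StepAt n d2 N' x' P' q) :
      StepAt n (Deduction.arrE hA hΓ hΔ d1 d2) (.app M N') x' P' q
  | congArrEBangL {n : ℕ} {ΓM ΔM ΓN ΔN : Ctx} {EM EN : PCtx} {M N : Term} {A B : Ty}
      {M' : Term} {x' : ℕ} {P' : Term} {q : Ded}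
      (hEM : ∀ p ∈ EM, p.1 = (∅ : Ctx))
      (hΓ : Disjoint (dom ΓM) (dom ΓN)) (hΔ : Disjoint (dom ΔM) (dom ΔN))
      (d1 : Deduction ΓM ΔM EM M (.arr (.bang A) B)) (d2 : Deduction ΓN ΔN EN N (.bang A))
      (hs : StepAt n d1 M' x' P' q) :
      StepAt n (Deduction.arrEBang hEM hΓ hΔ d1 d2) (.app M' N) x' P' q
  | congArrEBangR {n : ℕ} {ΓM ΔM ΓN ΔN : Ctx} {EM EN : PCtx} {M N : Term} {A B : Ty}
      {N' : Term} {x' : ℕ} {P' : Term} {q : Ded}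
      (hEM : ∀ p ∈ EM, p.1 = (∅ : Ctx))
      (hΓ : Disjoint (dom ΓM) (dom ΓN)) (hΔ : Disjoint (dom ΔM) (dom ΔN))
      (d1 : Deduction ΓM ΔM EM M (.arr (.bang A) B)) (d2 : Deduction ΓN ΔN EN N (.bang A))
      (hs : StepAt n d2 N' x' P' q) :
      StepAt n (Deduction.arrEBang hEM hΓ hΔ d1 d2) (.app M N') x' P' q
  | congEarrEL {n : ℕ} {ΓM Δ : Ctx} {EM EN : PCtx} {Θ : Ctx} {M N : Term} {A B : Ty}
      {M' : Term} {x' : ℕ} {P' : Term} {q : Ded}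
      (hEN : EN ⊆ {(Θ, (∅ : Ctx))})
      (d1 : Deduction ΓM Δ EM M (.earr A B)) (d2 : Deduction ∅ ∅ EN N (.par A))
      (hs : StepAt n d1 M' x' P' q) :
      StepAt n (Deduction.earrE hEN d1 d2) (.app M' N) x' P' q
  | congEarrER {n : ℕ} {ΓM Δ : Ctx} {EM EN : PCtx} {Θ : Ctx} {M N : Term} {A B : Ty}
      {N' : Term} {x' : ℕ} {P' : Term} {q : Ded}
      (hEN : EN ⊆ {(Θ, (∅ : Ctx))})
      (d1 : Deduction ΓM Δ EM M (.earr A B)) (d2 : Deduction ∅ ∅ EN N (.par A))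
      (hs : StepAt n d2 N' x' P' q) :
      StepAt n (Deduction.earrE hEN d1 d2) (.app M N') x' P' q
  | congBox {n : ℕ} {Γ Γ' Δ Δ' Θ' : Ctx} {E₂ : PCtx} {M : Term} {B : Ty}
      {N : Term} {x' : ℕ} {P' : Term} {q : Ded}
      (hcov : Γ ⊆ Δ ∪ E₂.biUnion (fun p => p.1 ∪ p.2))
      (hE₂ : ∀ p ∈ E₂, (p.1 ≠ (∅ : Ctx) ↔ p.2 = (∅ : Ctx)))
      (hΦ : ∀ p ∈ E₂, p.2.card ≤ 1)
      (prem : Deduction Γ Δ' {(Θ', (∅ : Ctx))} M B)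
      (hs : StepAt n prem N x' P' q) :
      StepAt (n + 1) (Deduction.box (Γ' := Γ') hcov hE₂ hΦ prem) N x' P' q
  | congBang {n : ℕ} {Γ Γ' Δ Θ' Θ Φ : Ctx} {M : Term} {B : Ty}
      {N : Term} {x' : ℕ} {P' : Term} {q : Ded}
      (hcov : Γ ⊆ Θ ∪ Φ) (hΦ : Φ.card ≤ 1)
      (hpoly : Θ ≠ ∅ → (dom Φ ∩ M.FV).Nonempty)
      (prem : Deduction Γ ∅ {(Θ', (∅ : Ctx))} M B)
      (hs : StepAt n prem N x' P' q) :
      StepAt (n + 1) (Deduction.bang (Γ' := Γ') (Δ := Δ) hcov hΦ hpoly prem) N x' P' q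
  | congAllI {n : ℕ} {Γ Δ : Ctx} {E : PCtx} {M : Term} {L : Ty} {a : ℕ}
      {N : Term} {x' : ℕ} {P' : Term} {q : Ded}
      (hL : L.Linear)
      (hfresh : (∀ p ∈ Γ, a ∉ Ty.ftv p.2) ∧ (∀ p ∈ Δ, a ∉ Ty.ftv p.2) ∧
        ∀ qq ∈ E, (∀ p ∈ qq.1, a ∉ Ty.ftv p.2) ∧ (∀ p ∈ qq.2, a ∉ Ty.ftv p.2))
      (prem : Deduction Γ Δ E M L)
      (hs : StepAt n prem N x' P' q) :
      StepAt n (Deduction.allI hL hfresh prem) N x' P' q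
  | congAllE {n : ℕ} {Γ Δ : Ctx} {E : PCtx} {M : Term} {a : ℕ} {L : Ty}
      {N : Term} {x' : ℕ} {P' : Term} {q : Ded}
      (L' : Ty) (hL' : L'.Linear)
      (prem : Deduction Γ Δ E M (.all a L))
      (hs : StepAt n prem N x' P' q) :
      StepAt n (Deduction.allE L' hL' prem) N x' P' q

/-- `M ⊳_n N` relative to the packaged deduction `D` (existentially over the
data of the contracted redex). -/
def StepAtAny (n : ℕ) (D : Ded) (N : Term) : Prop :=
  ∃ x P q, StepAt n D.ded N x P q

/-- `D` is in ⊳-normal form at depth `n`. -/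
def NormalAt (n : ℕ) (D : Ded) : Prop := ∀ N, ¬ StepAtAny n D N

/-! ### Rounds and canonical strategies -/

/-- A round at level `d` : a sequence of ⊳_d-steps, each step recording the
variable `x`, the body `P` and the subdeduction `q` typing the argument of the
contracted redex.  All judgments in the round share the contexts and the type
of the initial one (subject reduction). -/
structure Round (d : ℕ) : Type where
  len : ℕ
  ded : Fin (len + 1) → Ded
  x : Fin len → ℕ
  P : Fin len → Term
  q : Fin len → Ded
  sameCtx : ∀ i, (ded i).Γ = (ded 0).Γ ∧ (ded i).Δ = (ded 0).Δ ∧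
    (ded i).E = (ded 0).E ∧ (ded i).A = (ded 0).A
  step : ∀ i : Fin len,
    StepAt d (ded i.castSucc).ded ((ded i.succ).M) (x i) (P i) (q i)

/-- First deduction of a round. -/
def Round.first {d : ℕ} (R : Round d) : Ded := R.ded 0

/-- Last deduction of a round. -/
def Round.last {d : ℕ} (R : Round d) : Ded := R.ded (Fin.last R.len)

/-- A round is complete when its last term has no redex at level `d`. -/
def Round.Complete {d : ℕ} (R : Round d) : Prop := NormalAt d R.last

/-- The cost of a round, each step being charged quadratically in the size of
the term being reduced. -/
def Round.cost {d : ℕ} (R : Round d) : ℕ :=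
  ∑ j : Fin R.len, ((R.ded j.castSucc).M.size) ^ 2

/-- A canonical strategy from `start` : complete rounds at successive levels
`0, 1, …, d-1`. -/
structure CanStrat (start : Ded) (d : ℕ) : Type where
  D : Fin (d + 1) → Ded
  init : D 0 = start
  R : (i : Fin d) → Round i.val
  Rfirst : ∀ i, (R i).first = D i.castSucc
  Rlast : ∀ i, (R i).last = D i.succ
  Rcomplete : ∀ i, (R i).Complete

/-- A canonical strategy is complete when its final term is in ⊳-normal form. -/
def CanStrat.IsComplete {start : Ded} {d : ℕ} (S : CanStrat start d) : Prop :=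
  ∀ N, ¬ Step (S.D (Fin.last d)).M N

/-- Total number of ⊳-steps performed by a canonical strategy. -/
def CanStrat.steps {start : Ded} {d : ℕ} (S : CanStrat start d) : ℕ :=
  ∑ i : Fin d, (S.R i).len

/-- Total cost of a canonical strategy (quadratic cost per step). -/
def CanStrat.cost {start : Ded} {d : ℕ} (S : CanStrat start d) : ℕ :=
  ∑ i : Fin d, (S.R i).cost

/-! ### (Substitution) traces -/

/-- A trace: a set of sequences of deductions, each tagged by a (possibly
empty) set of polynomial variables. -/
abbrev Trace : Type := Set (Finset ℕ × List Ded)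

/-- An assignment of traces to (the subdeductions of) a deduction. -/
abbrev TraceAssign : Type := Ded → Trace

/-- A deduction ending in one of the modal rules `!`, `$`. -/
def ModalEnd (D : Ded) : Prop := endsInBang D.ded ∨ endsInPar D.ded

/-- Initial trace assignments: every subdeduction ending with a modal rule gets
(nonempty) singleton sequences consisting of itself; other subdeductions get
the empty trace. -/
def IsInitial (D0 : Ded) (ca : TraceAssign) : Prop :=
  ∀ D : Ded, Sub D D0 →
    (ModalEnd D → (ca D).Nonempty ∧ ∀ s ∈ ca D, s.2 = [D]) ∧
    (¬ ModalEnd D → ca D = ∅)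

/-- Stepwise transformation of trace assignments along one reduction step
whose contracted redex has argument subdeduction `q`: every sequence of the
new assignment either is a sequence of the old one, or is obtained by plugging
a sequence of the trace of `q` on top of a sequence of the old assignment. -/
def Evolves (Dold : Ded) (ca ca' : TraceAssign) (q : Ded) : Prop :=
  ∀ (P : Ded) (s : Finset ℕ × List Ded), s ∈ ca' P →
    (∃ P₀, Sub P₀ Dold ∧ s ∈ ca P₀) ∨
    (∃ P₀ s₁ s₂ Φ, Sub P₀ Dold ∧ (s.1, s₁) ∈ ca P₀ ∧ (Φ, s₂) ∈ ca q ∧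
      s.2 = s₁ ++ s₂)


/-!
Induction on the deduction. Only the rules `!`, `$` and `C` can conclude a modal type for a
value: axioms and `∀E` yield linear types (a value of type `∀α.L` has `L` linear), and the
elimination rules type applications. A contraction cannot conclude a `!`-type either, because
after the rule `!` at most one pair of `E` has a nonempty polynomial part, while the premise of
`C` has two. The inclusions of free variables follow from `FV(M) ⊆ dom Γ ∪ dom Δ ∪ dom E` for the
premise of `!` or `$`, whose side conditions move `dom Γ` into the discharged contexts.
-/

@[simp] lemma dom_empty : dom ∅ = ∅ := rfl

@[simp] lemma dom_insert (x : ℕ) (A : Ty) (Γ : Ctx) :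
    dom (insert (x, A) Γ) = insert x (dom Γ) :=
  Finset.image_insert _ _ _

@[simp] lemma dom_singleton (x : ℕ) (A : Ty) : dom {(x, A)} = {x} := rfl

@[simp] lemma dom_union (Γ Δ : Ctx) : dom (Γ ∪ Δ) = dom Γ ∪ dom Δ :=
  Finset.image_union _ _

@[simp] lemma dom_parc (Γ : Ctx) : dom (parc Γ) = dom Γ := by
  simp only [dom, parc, Finset.image_image]
  rfl

lemma dom_mono {Γ Δ : Ctx} (h : Γ ⊆ Δ) : dom Γ ⊆ dom Δ :=
  Finset.image_subset_image h

@[simp] lemma domE_insert (p : Ctx × Ctx) (E : PCtx) :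
    domE (insert p E) = dom p.1 ∪ dom p.2 ∪ domE E := by
  simp [domE, Finset.biUnion_insert]

@[simp] lemma domE_singleton (p : Ctx × Ctx) : domE {p} = dom p.1 ∪ dom p.2 := by
  simp [domE]

lemma dom_biUnion (E : PCtx) : dom (E.biUnion fun p => p.1 ∪ p.2) = domE E := by
  simp only [dom, domE, Finset.biUnion_image, Finset.image_union]

lemma dom_subset_domE {E : PCtx} {p : Ctx × Ctx} (hp : p ∈ E) :
    dom p.1 ∪ dom p.2 ⊆ domE E :=
  Finset.subset_biUnion_of_mem (fun p : Ctx × Ctx => dom p.1 ∪ dom p.2) hp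

lemma mem_pmerge_of_mem_of_mem {E F : PCtx} {p q : Ctx × Ctx} (hp : p ∈ E) (hq : q ∈ F)
    (hpq : p.2 = q.2) : (p.1 ∪ q.1, p.2) ∈ pmerge E F :=
  Finset.mem_union_left _ (Finset.mem_union_left _ (Finset.mem_image.2
    ⟨(p, q), Finset.mem_filter.2 ⟨Finset.mem_product.2 ⟨hp, hq⟩, hpq⟩, rfl⟩))

@[simp] lemma domE_pmerge (E F : PCtx) : domE (pmerge E F) = domE E ∪ domE F := by
  apply subset_antisymm
  · refine Finset.biUnion_subset.2 fun r hr => ?_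
    simp only [pmerge, Finset.mem_union, Finset.mem_image, Finset.mem_filter,
      Finset.mem_product] at hr
    rcases hr with (⟨⟨p, q⟩, ⟨⟨hp, hq⟩, -⟩, rfl⟩ | ⟨hr, -⟩) | ⟨hr, -⟩
    · have hpE := dom_subset_domE hp
      have hqF := dom_subset_domE hq
      simp only [dom_union, Finset.union_subset_iff] at hpE hqF ⊢
      grind
    · exact (dom_subset_domE hr).trans Finset.subset_union_left
    · exact (dom_subset_domE hr).trans Finset.subset_union_right
  · refine Finset.union_subset (Finset.biUnion_subset.2 fun p hp => ?_)
      (Finset.biUnion_subset.2 fun q hq => ?_)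
    · by_cases h : ∃ q ∈ F, p.2 = q.2
      · obtain ⟨q, hq, hpq⟩ := h
        exact (Finset.union_subset_union_left (dom_mono Finset.subset_union_left)).trans
          (dom_subset_domE (mem_pmerge_of_mem_of_mem hp hq hpq))
      · exact dom_subset_domE (Finset.mem_union_left _ (Finset.mem_union_right _
          (Finset.mem_filter.2 ⟨hp, fun q hq hqp => h ⟨q, hq, hqp.symm⟩⟩)))
    · by_cases h : ∃ p ∈ E, p.2 = q.2
      · obtain ⟨p, hp, hpq⟩ := h
        exact (Finset.union_subset_union (dom_mono Finset.subset_union_right)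
          (hpq ▸ subset_rfl)).trans (dom_subset_domE (mem_pmerge_of_mem_of_mem hp hq hpq))
      · exact dom_subset_domE (Finset.mem_union_right _
          (Finset.mem_filter.2 ⟨hq, fun p hp => (h ⟨p, hp, ·⟩)⟩))

lemma mem_pmerge_singleton {p q r : Ctx × Ctx} (hr : r ∈ pmerge {p} {q}) :
    r.2 = p.2 ∨ r = q := by
  simp only [pmerge, Finset.mem_union, Finset.mem_image, Finset.mem_filter,
    Finset.mem_product, Finset.mem_singleton] at hr
  grind

lemma Term.IsValue.of_subst {M N : Term} {x : ℕ} (h : (M.subst x N).IsValue) :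
    M.IsValue := by
  cases M <;> simp_all [Term.subst, Term.IsValue]

lemma Term.FV_subst_subset (M N : Term) (x : ℕ) :
    (M.subst x N).FV ⊆ N.FV ∪ M.FV.erase x := by
  induction M with
  | var y => by_cases h : y = x <;> simp [Term.subst, Term.FV, h]
  | lam y M ih =>
    by_cases h : y = x
    · subst h
      simp [Term.subst, Term.FV]
    · simp only [Finset.subset_iff] at ih
      simp only [Term.subst, h, if_false, Term.FV, Finset.subset_iff, Finset.mem_erase,
        Finset.mem_union]
      grind
  | app M P ihM ihP =>
    simp only [Term.subst, Term.FV, Finset.erase_union_distrib]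
    grind

lemma Ty.Linear.ne_bang {L : Ty} (h : L.Linear) (A : Ty) : L ≠ .bang A := by
  rintro rfl; exact h

lemma Ty.Linear.ne_par {L : Ty} (h : L.Linear) (A : Ty) : L ≠ .par A := by
  rintro rfl; exact h

lemma Ty.Linear.tsubst {L L' : Ty} (h : L.Linear) (h' : L'.Linear) (a : ℕ) :
    (L.tsubst a L').Linear := by
  induction L with
  | tvar b => by_cases hb : b = a <;> simp [Ty.tsubst, hb, h', Ty.Linear]
  | all b L ih => by_cases hb : b = a <;> simp_all [Ty.tsubst, Ty.Linear]
  | _ => simp_all [Ty.tsubst, Ty.Linear]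

lemma FV_subset_of_contr {S : Finset ℕ} {E : PCtx} {Θx Θy : Ctx} {x y z : ℕ} {A : Ty}
    {M : Term} (h : M.FV ⊆ S ∪ domE (insert (Θx, {(x, A)}) (insert (Θy, {(y, A)}) E))) :
    ((M.subst x (.var z)).subst y (.var z)).FV ⊆
      S ∪ domE (pmerge E {(Θx ∪ Θy, {(z, A)})}) := by
  have hy := Term.FV_subst_subset (M.subst x (.var z)) (.var z) y
  have hx := Term.FV_subst_subset M (.var z) x
  simp only [Finset.subset_iff] at *
  simp only [Term.FV, dom_union, dom_singleton, domE_insert, domE_singleton, domE_pmerge,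
    Finset.mem_union, Finset.mem_singleton, Finset.mem_erase] at *
  grind

lemma FV_subset_of_box {Γ Δ Δ' Θ' : Ctx} {E₂ : PCtx} {M : Term}
    (hcov : Γ ⊆ Δ ∪ E₂.biUnion (fun p => p.1 ∪ p.2))
    (hM : M.FV ⊆ dom Γ ∪ dom Δ' ∪ domE {(Θ', ∅)}) :
    M.FV ⊆ dom (parc Δ' ∪ Δ) ∪ domE (pmerge {(parc Θ', ∅)} E₂) := by
  have hΓ := dom_mono hcov
  simp only [Finset.subset_iff] at *
  simp only [dom_union, dom_empty, dom_parc, dom_biUnion, domE_singleton, domE_pmerge,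
    Finset.mem_union] at *
  grind

lemma FV_subset_of_bang {Γ Θ' Θ Φ : Ctx} {M : Term} (hcov : Γ ⊆ Θ ∪ Φ)
    (hM : M.FV ⊆ dom Γ ∪ dom ∅ ∪ domE {(Θ', ∅)}) :
    M.FV ⊆ domE (pmerge {(parc Θ', ∅)} {(Θ, Φ)}) := by
  have hΓ := dom_mono hcov
  simp only [Finset.subset_iff] at *
  simp only [dom_union, dom_empty, dom_parc, domE_singleton, domE_pmerge, Finset.mem_union] at *
  grind

namespace Deduction

lemma linear_of_isValue_of_all {Γ Δ : Ctx} {E : PCtx} {M : Term} {C : Ty}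
    (d : Deduction Γ Δ E M C) (hM : M.IsValue) {a : ℕ} {L : Ty} (hC : C = .all a L) :
    L.Linear := by
  induction d generalizing a L with
  | ax hL => exact (hC ▸ hL : (Ty.all a L).Linear)
  | contr _ _ _ ih => exact ih hM.of_subst.of_subst hC
  | allI hL => cases hC; exact hL
  | allE L' hL' _ ih => exact (hC ▸ (ih hM rfl).tsubst hL' _ : (Ty.all a L).Linear)
  | arrE | arrEBang | earrE => exact hM.elim
  | _ => cases hC

theorem FV_subset {Γ Δ : Ctx} {E : PCtx} {M : Term} {B : Ty} (d : Deduction Γ Δ E M B) :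
    M.FV ⊆ dom Γ ∪ dom Δ ∪ domE E := by
  induction d with
  | contr _ _ _ ih => exact FV_subset_of_contr ih
  | box hcov _ _ _ ih =>
    exact (FV_subset_of_box hcov ih).trans
      (Finset.union_subset_union_left Finset.subset_union_right)
  | bang hcov _ _ _ ih => exact (FV_subset_of_bang hcov ih).trans Finset.subset_union_right
  | allI _ _ _ ih | allE _ _ _ ih => exact ih
  | _ =>
    simp only [Finset.subset_iff] at *
    simp only [Term.FV, dom_insert, dom_union, dom_empty, dom_singleton, domE_insert,
      domE_singleton, domE_pmerge, Finset.mem_union, Finset.mem_insert, Finset.mem_singleton,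
      Finset.mem_erase] at *
    all_goals grind

lemma polyPart_subsingleton_of_endsInBang {Γ Δ : Ctx} {E : PCtx} {M : Term} {B : Ty}
    {d : Deduction Γ Δ E M B} (h : endsInBang d) :
    ((E.filter fun p => p.2 ≠ ∅ : PCtx) : Set (Ctx × Ctx)).Subsingleton := by
  cases d with
  | bang =>
    intro p hp q hq
    simp only [Finset.mem_coe, Finset.mem_filter] at hp hq
    rcases mem_pmerge_singleton hp.1 with hp' | rfl
    · exact (hp.2 hp').elim
    rcases mem_pmerge_singleton hq.1 with hq' | rfl
    · exact (hq.2 hq').elim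
    rfl
  | _ => exact h.elim

lemma not_endsInBang_of_contr_premise {Γ Δ : Ctx} {E : PCtx} {Θx Θy : Ctx} {x y : ℕ} {A : Ty}
    {M : Term} {B : Ty} (h1 : (Θx, ({(x, A)} : Ctx)) ∉ insert (Θy, ({(y, A)} : Ctx)) E)
    (d : Deduction Γ Δ (insert (Θx, {(x, A)}) (insert (Θy, {(y, A)}) E)) M B) :
    ¬ endsInBang d := fun h => by
  have := polyPart_subsingleton_of_endsInBang h
    (Finset.mem_filter.2 ⟨Finset.mem_insert_self _ _, by simp⟩)
    (Finset.mem_filter.2 ⟨Finset.mem_insert_of_mem (Finset.mem_insert_self _ _), by simp⟩)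
  exact h1 (this ▸ Finset.mem_insert_self _ _)

end Deduction

/-- **Structural properties, points 8 and 9** : let `Π` derive `Γ;Δ;E ⊢ M:B`
with `M` a value.
(1) If `B = !A` then the last rule of `Π` is `!` and `FV(M) ⊆ dom(E)`.
(2) If `B = $A` then the last rule of `Π` is `$` or `C`, and
`FV(M) ⊆ dom(Δ) ∪ dom(E)`. -/
theorem value_modal_last_rule
    {Γ Δ : Ctx} {E : PCtx} {M : Term} {B : Ty} (d : Deduction Γ Δ E M B)
    (hval : M.IsValue) :
    (∀ A : Ty, B = .bang A → endsInBang d ∧ M.FV ⊆ domE E) ∧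
    (∀ A : Ty, B = .par A →
      (endsInPar d ∨ endsInContr d) ∧ M.FV ⊆ dom Δ ∪ domE E) := by
  induction d with
  | ax hL => exact ⟨fun A hA => (hL.ne_bang A hA).elim, fun A hA => (hL.ne_par A hA).elim⟩
  | @allE _ _ _ _ a _ L' hL' prem =>
    have hL := (prem.linear_of_isValue_of_all hval rfl).tsubst hL' a
    exact ⟨fun A hA => (hL.ne_bang A hA).elim, fun A hA => (hL.ne_par A hA).elim⟩
  | contr h1 _ prem ih =>
    obtain ⟨ihBang, ihPar⟩ := ih hval.of_subst.of_subst
    exact ⟨fun A hA => (prem.not_endsInBang_of_contr_premise h1 (ihBang A hA).1).elim,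
      fun A hA => ⟨Or.inr trivial, FV_subset_of_contr (ihPar A hA).2⟩⟩
  | box hcov _ _ prem =>
    exact ⟨by simp, fun _ _ => ⟨Or.inl trivial, FV_subset_of_box hcov prem.FV_subset⟩⟩
  | bang hcov _ _ prem =>
    exact ⟨fun _ _ => ⟨trivial, FV_subset_of_bang hcov prem.FV_subset⟩, by simp⟩
  | arrE | arrEBang | earrE => exact hval.elim
  | _ => simp

end WALT
end

section
/- Assume Π_M derives Γ;Δ;E ⊢ M:A in WALT, and assume that for every level i every complete round N_i ↠_i N_{i+1} satisfies |Π_{N_{i+1}}| ≤ p_i(|Π_{N_i}|) for a polynomial p_i of degree deg(p_i). Then for every complete canonical strategy M ≡ N₀ ↠₀ N₁ ↠₁ ⋯ ↠_{∂(Π_M)} N_{∂(Π_M)+1} from M, we have |Π_{N_{∂(Π_M)+1}}| ≤ p(|Π_M|) for a polynomial p with deg(p) = Π_{i=0}^{∂(Π_M)} deg(p_i), namely p = p_{∂(Π_M)} ∘ ⋯ ∘ p₁ ∘ p₀. -/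
set_option maxHeartbeats 1000000
/-
A formalization of the syntax of Weak Affine Light Typing (WALT),
following L. Roversi, "Weak Affine Light Typing: Polytime intensional
expressivity, soundness and completeness".

* `Term`  : pure λ-terms with named variables,
* `Ty`    : WALT formulae  A ::= L | !A | $A ,  L ::= α | A⊸A | $A⊸ᵉA | ∀α.L,
* `Deduction Γ Δ E M A` : the deductions of the judgment Γ;Δ;E ⊢ M:A of Fig. 1,
* measures `depth`, `psz` (partial size) and `width` of a deduction,
* the rewriting relation `Step` (⊳) and its depth-indexed version `StepAt`,
* rounds and canonical strategies.
-/

namespace WALT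

/-- The composition `p_D ∘ ⋯ ∘ p₁ ∘ p₀` of a family of polynomials. -/
noncomputable def polyComp (D : ℕ) (p : ℕ → Polynomial ℕ) : Polynomial ℕ :=
  (List.range (D + 1)).foldl (fun acc i => (p i).comp acc) Polynomial.X

private lemma eval_mono (p : Polynomial ℕ) {a b : ℕ} (h : a ≤ b) :
    p.eval a ≤ p.eval b := by
  rw [Polynomial.eval_eq_sum_range, Polynomial.eval_eq_sum_range]
  exact Finset.sum_le_sum fun i _ => Nat.mul_le_mul_left _ (Nat.pow_le_pow_left h i)

/-- Partial composition `p_{k-1} ∘ ⋯ ∘ p₀`. -/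
private noncomputable def pcomp (k : ℕ) (p : ℕ → Polynomial ℕ) : Polynomial ℕ :=
  (List.range k).foldl (fun acc i => (p i).comp acc) Polynomial.X

private lemma pcomp_succ (k : ℕ) (p : ℕ → Polynomial ℕ) :
    pcomp (k + 1) p = (p k).comp (pcomp k p) := by
  unfold pcomp; rw [List.range_succ, List.foldl_append]; rfl

private lemma polyComp_eq (D : ℕ) (p : ℕ → Polynomial ℕ) :
    polyComp D p = pcomp (D + 1) p := rfl

private lemma pcomp_natDegree (k : ℕ) (p : ℕ → Polynomial ℕ) :
    (pcomp k p).natDegree = ∏ i ∈ Finset.range k, (p i).natDegree := by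
  induction k with
  | zero => simp [pcomp]
  | succ k ih =>
      rw [pcomp_succ, Polynomial.natDegree_comp, ih, Finset.prod_range_succ, mul_comm]

/-- **Bounding the result size of any complete canonical strategy** : assume
that for every level `i` every complete round at level `i` increases the size
of the underlying deduction at most by the polynomial `p i`, i.e.
`|Π_{N_{i+1}}| ≤ p_i(|Π_{N_i}|)`.  Then along every complete canonical strategy
`M ≡ N₀ ↠₀ N₁ ↠₁ ⋯ ↠_{∂(Π_M)} N_{∂(Π_M)+1}` from `M` we have
`|Π_{N_{∂(Π_M)+1}}| ≤ p(|Π_M|)` where `p = p_{∂(Π_M)} ∘ ⋯ ∘ p₁ ∘ p₀`, a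
polynomial of degree `Π_{i=0}^{∂(Π_M)} deg(p_i)`. -/
theorem bounding_result_of_complete_canonical_strategy
    (Dm : Ded) (S : CanStrat Dm (Dm.depth + 1)) (hS : S.IsComplete)
    (p : ℕ → Polynomial ℕ)
    (hp : ∀ (i : ℕ) (R : Round i), R.Complete →
      R.last.dsize ≤ (p i).eval R.first.dsize) :
    (S.D (Fin.last (Dm.depth + 1))).dsize ≤
        (polyComp Dm.depth p).eval Dm.dsize ∧
      (polyComp Dm.depth p).natDegree =
        ∏ i ∈ Finset.range (Dm.depth + 1), (p i).natDegree := by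
  constructor
  · have key : ∀ k (hk : k ≤ Dm.depth + 1),
        (S.D ⟨k, by omega⟩).dsize ≤ (pcomp k p).eval Dm.dsize := by
      intro k
      induction k with
      | zero =>
          intro _
          simp only [pcomp, List.range_zero, List.foldl_nil, Polynomial.eval_X]
          exact le_of_eq (congrArg Ded.dsize S.init)
      | succ k ih =>
          intro hk
          have hk' : k < Dm.depth + 1 := by omega
          set i : Fin (Dm.depth + 1) := ⟨k, hk'⟩ with hi
          have hfirst : (S.R i).first = S.D ⟨k, by omega⟩ := S.Rfirst i
          have hlast : (S.R i).last = S.D ⟨k + 1, by omega⟩ := S.Rlast i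
          have hstep := hp k (S.R i) (S.Rcomplete i)
          rw [hfirst, hlast] at hstep
          calc (S.D ⟨k + 1, by omega⟩).dsize
              ≤ (p k).eval (S.D ⟨k, by omega⟩).dsize := hstep
            _ ≤ (p k).eval ((pcomp k p).eval Dm.dsize) :=
                eval_mono _ (ih (by omega))
            _ = (pcomp (k + 1) p).eval Dm.dsize := by
                rw [pcomp_succ, Polynomial.eval_comp]
    have := key (Dm.depth + 1) le_rfl
    rw [polyComp_eq]
    exact this
  · rw [polyComp_eq, pcomp_natDegree]

end WALT
end
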